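/- arXiv:1410.4154 — 3 statements merged into one kernel-verified Lean document; each statement's English description precedes it below -/
import Mathlib

section
/- In the game G₁, no memoryless (positional) pure strategy profile is a Nash equilibrium; that is, G₁ has no memoryless pure Nash equilibrium. -/
open scoped BigOperators

/-- A multi-player discounted sum game (MDSG) on sets of players `P`,
vertices `V` and actions `A`, all required to be finite (`A` nonempty).
The `owner` of a vertex chooses the action there; `tr` is the transition
function, `rew p v a` is the reward of player `p` for taking action `a`
at vertex `v`, `init` is the initial probability distribution on the
vertices, and `disc` is the discount factor. -/
structure MDSG (P V A : Type) : Type where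
  fin_P : Finite P
  fin_V : Finite V
  fin_A : Finite A
  nonempty_A : Nonempty A
  owner : V → P
  tr : V → A → V
  rew : P → V → A → ℝ
  init : V → ℝ
  init_nonneg : ∀ v, 0 ≤ init v
  init_sum : ∑' v, init v = 1
  disc : ℝ
  disc_pos : 0 < disc
  disc_lt_one : disc < 1

/-- A pure strategy profile: given the history (the list of vertex/action pairs
seen so far) and the current vertex, the owner of the current vertex chooses
an action.  The strategy of an individual player `p` is the restriction of the
profile to the vertices owned by `p`. -/
abbrev Profile (V A : Type) : Type := List (V × A) → V → A

namespace MDSG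

variable {P V A : Type}

/-- The pair (history, current vertex) after `n` steps of the play of `σ` from `v`. -/
def histState (G : MDSG P V A) (σ : Profile V A) (v : V) : ℕ → List (V × A) × V
  | 0 => ([], v)
  | n + 1 =>
    let s := G.histState σ v n
    (s.1 ++ [(s.2, σ s.1 s.2)], G.tr s.2 (σ s.1 s.2))

/-- The vertex visited at step `n` of the play of `σ` from `v`. -/
def playV (G : MDSG P V A) (σ : Profile V A) (v : V) (n : ℕ) : V :=
  (G.histState σ v n).2

/-- The action taken at step `n` of the play of `σ` from `v`. -/
def playA (G : MDSG P V A) (σ : Profile V A) (v : V) (n : ℕ) : A :=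
  σ (G.histState σ v n).1 (G.playV σ v n)

/-- The discounted reward of player `p` on the play of `σ` from `v`. -/
noncomputable def reward (G : MDSG P V A) (p : P) (σ : Profile V A) (v : V) : ℝ :=
  ∑' i : ℕ, G.rew p (G.playV σ v i) (G.playA σ v i) * G.disc ^ i

/-- The expected reward of player `p` under the strategy profile `σ`. -/
noncomputable def ER (G : MDSG P V A) (p : P) (σ : Profile V A) : ℝ :=
  ∑' v : V, G.init v * G.reward p σ v

/-- `σ'` differs from `σ` at most in the strategy of player `p`. -/
def DiffOnly (G : MDSG P V A) (σ σ' : Profile V A) (p : P) : Prop :=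
  ∀ h v, G.owner v ≠ p → σ' h v = σ h v

/-- Nash equilibrium: no player can profit from a unilateral deviation. -/
def IsNash (G : MDSG P V A) (σ : Profile V A) : Prop :=
  ∀ p σ', G.DiffOnly σ σ' p → G.ER p σ' ≤ G.ER p σ

/-- Leader strategy profile: no player other than the leader `l` can profit
from a unilateral deviation. -/
def IsLeaderSP (G : MDSG P V A) (l : P) (σ : Profile V A) : Prop :=
  ∀ p, p ≠ l → ∀ σ', G.DiffOnly σ σ' p → G.ER p σ' ≤ G.ER p σ

/-- `σ` is a (pure) strategy profile with memory bound `b`: there is a memory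
set `M` with `|M| ≤ b`, an initial memory state, a memory update function and
a usage function producing all the actions of `σ`. -/
def MemBound (G : MDSG P V A) (σ : Profile V A) (b : ℕ) : Prop :=
  ∃ n : ℕ, n ≤ b ∧ ∃ (m₀ : Fin n) (μ : Fin n → V × A → Fin n) (u : Fin n → V → A),
    ∀ h v, σ h v = u (h.foldl μ m₀) v

/-- `σ` is memoryless (positional): actions depend only on the current vertex. -/
def Positional (G : MDSG P V A) (σ : Profile V A) : Prop :=
  ∀ h h' v, σ h v = σ h' v

open Classical in
/-- Combination of a strategy for player `p` with a joint strategy of the other players. -/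
noncomputable def combine (G : MDSG P V A) (p : P) (τp τo : Profile V A) : Profile V A :=
  fun h v => if G.owner v = p then τp h v else τo h v

/-- The lower value of player `p` at vertex `v`: the supremum over the pure
strategies of `p` of the infimum over the joint pure strategies of the other
players of the reward of `p` on the resulting play from `v`. -/
noncomputable def lowerValue (G : MDSG P V A) (p : P) (v : V) : ℝ :=
  ⨆ τp : Profile V A, ⨅ τo : Profile V A, G.reward p (G.combine p τp τo) v

/-- The upper value of player `p` at vertex `v`. -/
noncomputable def upperValue (G : MDSG P V A) (p : P) (v : V) : ℝ :=
  ⨅ τo : Profile V A, ⨆ τp : Profile V A, G.reward p (G.combine p τp τo) v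

/-- The history `h` contains a deviation from `σ` at position `i`. -/
def DeviatesAt (G : MDSG P V A) (σ : Profile V A) (h : List (V × A)) (i : ℕ) : Prop :=
  ∃ hi : i < h.length, (h.get ⟨i, hi⟩).2 ≠ σ (h.take i) (h.get ⟨i, hi⟩).1

/-- Reward-and-punish profile: on every history that deviates from the
prescribed actions, every action depends only on the current vertex and on the
identity of the first player who deviated (all players follow a fixed
positional strategy depending only on the first deviator). -/
def IsRewardPunish (G : MDSG P V A) (σ : Profile V A) : Prop :=
  ∃ punish : P → V → A, ∀ (h : List (V × A)) (i : ℕ) (hi : i < h.length),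
    G.DeviatesAt σ h i → (∀ j, j < i → ¬ G.DeviatesAt σ h j) →
    ∀ v, σ h v = punish (G.owner (h.get ⟨i, hi⟩).1) v

/-- The outcome plays of `σ` are generated with compliance memory bound `b`:
on every history on which all players have complied, the actions of `σ` are
produced by a memory structure with at most `b` states. -/
def ComplianceMemBound (G : MDSG P V A) (σ : Profile V A) (b : ℕ) : Prop :=
  ∃ n : ℕ, n ≤ b ∧ ∃ (m₀ : Fin n) (μ : Fin n → V × A → Fin n) (u : Fin n → V → A),
    ∀ h : List (V × A), (∀ i, ¬ G.DeviatesAt σ h i) →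
      ∀ v, σ h v = u (h.foldl μ m₀) v

/-- The set of stationary mixed decision vectors: an assignment of a
probability distribution over the actions to every vertex. -/
def simplexD (V A : Type) : Set (V → A → ℝ) :=
  {d | ∀ v, (∀ a, 0 ≤ d v a) ∧ ∑' a, d v a = 1}

end MDSG
namespace MDSG

/-- The game `G₁` (Figure 1 of the paper): three players `0, 1, 2`
(representing players 1, 2, 3); six vertices, where `0, 1, 2` represent the
vertices 1, 2, 3 and `3, 4, 5` represent the sinks `s₁, s₂, s₃`; vertex `i`
and sink `3 + i` are owned by player `i`; actions `Bool`.  Vertex `0`: `true`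
moves to vertex `1` with rewards `(0,0,0)`, `false` moves to the sink `3` with
rewards `(2,1,9)`.  Vertex `1`: `true` moves to vertex `2` with rewards
`(0,0,0)`, `false` moves to the sink `4` with rewards `(9,2,1)`.  Vertex `2`:
`true` moves to vertex `0` with rewards `(0,0,0)`, `false` moves to the sink
`5` with rewards `(1,9,2)`.  The sinks loop with rewards `(0,0,0)`.  The
initial distribution assigns probability `1/3` to each of the vertices
`0, 1, 2`, and the discount factor is `1/2`. -/
noncomputable def G1 : MDSG (Fin 3) (Fin 6) Bool where
  fin_P := inferInstance
  fin_V := inferInstance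
  fin_A := inferInstance
  nonempty_A := inferInstance
  owner := ![0, 1, 2, 0, 1, 2]
  tr := fun v a =>
    if v = 0 then (if a then 1 else 3)
    else if v = 1 then (if a then 2 else 4)
    else if v = 2 then (if a then 0 else 5)
    else v
  rew := fun p v a =>
    if a then 0
    else if v = 0 then ![2, 1, 9] p
    else if v = 1 then ![9, 2, 1] p
    else if v = 2 then ![1, 9, 2] p
    else 0
  init := fun v => if v.val < 3 then 1 / 3 else 0
  init_nonneg := by intro v; (try dsimp only); split <;> norm_num
  init_sum := by
    rw [tsum_fintype, Fin.sum_univ_six]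
    norm_num [show ((0 : Fin 6) : ℕ) = 0 from rfl, show ((1 : Fin 6) : ℕ) = 1 from rfl,
      show ((2 : Fin 6) : ℕ) = 2 from rfl, show ((3 : Fin 6) : ℕ) = 3 from rfl,
      show ((4 : Fin 6) : ℕ) = 4 from rfl, show ((5 : Fin 6) : ℕ) = 5 from rfl]
  disc := 1 / 2
  disc_pos := by norm_num
  disc_lt_one := by norm_num

end MDSG

/-! A positional profile of `G₁` is determined by the three choices "continue or exit" at the
vertices `1, 2, 3`, and the discounted-reward recursion along the cycle gives every player's
expected reward in closed form. Player `i` prefers the exit of the next player (reward `9`) to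
their own exit (`2`), that to the exit of the previous player (`1`), and that to no exit at
all (`0`); checking the eight profiles, in each one some player gains by changing their choice. -/

namespace MDSG

variable {P V A : Type} {G : MDSG P V A} {σ : Profile V A}

theorem Positional.histState_succ_snd (hσ : G.Positional σ) (v : V) (n : ℕ) :
    (G.histState σ v (n + 1)).2 = (G.histState σ (G.tr v (σ [] v)) n).2 := by
  induction n with
  | zero => rfl
  | succ n ih =>
    change G.tr _ (σ _ _) = G.tr _ (σ _ _)
    rw [hσ _ [], ih]
    exact congrArg _ (hσ _ _ _)

theorem Positional.playV_succ (hσ : G.Positional σ) (v : V) (n : ℕ) :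
    G.playV σ v (n + 1) = G.playV σ (G.tr v (σ [] v)) n :=
  hσ.histState_succ_snd v n

theorem Positional.playA_eq (hσ : G.Positional σ) (v : V) (n : ℕ) :
    G.playA σ v n = σ [] (G.playV σ v n) :=
  hσ _ [] _

theorem Positional.playA_succ (hσ : G.Positional σ) (v : V) (n : ℕ) :
    G.playA σ v (n + 1) = G.playA σ (G.tr v (σ [] v)) n := by
  rw [hσ.playA_eq, hσ.playA_eq, hσ.playV_succ]

variable (G) in
theorem summable_reward (p : P) (σ : Profile V A) (v : V) :
    Summable fun i => G.rew p (G.playV σ v i) (G.playA σ v i) * G.disc ^ i := by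
  have := G.fin_V
  have := G.fin_A
  obtain ⟨C, hC⟩ := (Set.finite_range fun x : V × A => ‖G.rew p x.1 x.2‖).bddAbove
  refine .of_norm_bounded ((summable_geometric_of_lt_one G.disc_pos.le G.disc_lt_one).mul_left C)
    fun i => ?_
  rw [norm_mul, norm_pow, Real.norm_of_nonneg G.disc_pos.le]
  exact mul_le_mul_of_nonneg_right (hC ⟨(_, _), rfl⟩) (pow_nonneg G.disc_pos.le i)

theorem Positional.reward_eq (hσ : G.Positional σ) (p : P) (v : V) :
    G.reward p σ v = G.rew p v (σ [] v) + G.disc * G.reward p σ (G.tr v (σ [] v)) := by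
  rw [reward, (G.summable_reward p σ v).tsum_eq_zero_add, reward, ← tsum_mul_left]
  congr 1
  · simp [playV, playA, histState]
  · congr 1 with i
    rw [hσ.playV_succ, hσ.playA_succ, pow_succ]
    ring

theorem Positional.reward_eq_zero_of_absorbing (hσ : G.Positional σ) (p : P) {v : V}
    (hloop : G.tr v (σ [] v) = v) (hrew : G.rew p v (σ [] v) = 0) : G.reward p σ v = 0 := by
  have h := hσ.reward_eq p v
  rw [hloop, hrew, zero_add] at h
  nlinarith [G.disc_lt_one]

def deviate [DecidableEq V] (σ : Profile V A) (d : V) (a : A) : Profile V A :=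
  fun h => Function.update (σ h) d a

variable [DecidableEq V]

theorem deviate_apply (σ : Profile V A) (d : V) (a : A) (h : List (V × A)) (v : V) :
    deviate σ d a h v = if v = d then a else σ h v :=
  Function.update_apply _ _ _ _

theorem Positional.deviate (hσ : G.Positional σ) (d : V) (a : A) :
    G.Positional (deviate σ d a) := by
  intro h h' v
  simp only [deviate_apply, hσ h h' v]

variable (G) in
theorem diffOnly_deviate (σ : Profile V A) (d : V) (a : A) :
    G.DiffOnly σ (deviate σ d a) (G.owner d) := by
  intro h v hv
  exact Function.update_of_ne (fun hvd => hv (congrArg G.owner hvd)) a (σ h)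

theorem IsNash.ER_deviate_le (hσ : G.IsNash σ) (d : V) (a : A) :
    G.ER (G.owner d) (deviate σ d a) ≤ G.ER (G.owner d) σ :=
  hσ _ _ (G.diffOnly_deviate σ d a)

end MDSG

namespace MDSG

/-- The discounted reward (discount `1/2`) from the first vertex of a three-vertex cycle with exit
rewards `r₀ r₁ r₂`, where `bᵢ = true` means that the play continues along the cycle at the `i`-th
vertex. -/
noncomputable def cycleReward (r₀ r₁ r₂ : ℝ) : Bool → Bool → Bool → ℝ
  | false, _, _ => r₀
  | true, false, _ => r₁ / 2
  | true, true, false => r₂ / 4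
  | true, true, true => 0

noncomputable def G1payoff (p : Fin 3) (b₀ b₁ b₂ : Bool) : ℝ :=
  let r : Fin 6 → ℝ := fun v => G1.rew p v false
  (cycleReward (r 0) (r 1) (r 2) b₀ b₁ b₂ + cycleReward (r 1) (r 2) (r 0) b₁ b₂ b₀ +
    cycleReward (r 2) (r 0) (r 1) b₂ b₀ b₁) / 3

variable {σ : Profile (Fin 6) Bool}

theorem G1_reward_sink (hσ : G1.Positional σ) (p : Fin 3) {v : Fin 6} (hv : 3 ≤ v.val) :
    G1.reward p σ v = 0 := by
  apply hσ.reward_eq_zero_of_absorbing <;> fin_cases v <;> simp_all [G1]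

theorem G1_reward_eq_cycleReward (hσ : G1.Positional σ) (p : Fin 3) :
    let r : Fin 6 → ℝ := fun v => G1.rew p v false
    G1.reward p σ 0 = cycleReward (r 0) (r 1) (r 2) (σ [] 0) (σ [] 1) (σ [] 2) ∧
    G1.reward p σ 1 = cycleReward (r 1) (r 2) (r 0) (σ [] 1) (σ [] 2) (σ [] 0) ∧
    G1.reward p σ 2 = cycleReward (r 2) (r 0) (r 1) (σ [] 2) (σ [] 0) (σ [] 1) := by
  have h₀ := hσ.reward_eq p 0
  have h₁ := hσ.reward_eq p 1
  have h₂ := hσ.reward_eq p 2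
  have s₃ := G1_reward_sink hσ p (v := 3) le_rfl
  have s₄ := G1_reward_sink hσ p (v := 4) (by decide)
  have s₅ := G1_reward_sink hσ p (v := 5) (by decide)
  generalize σ [] 0 = b₀, σ [] 1 = b₁, σ [] 2 = b₂ at h₀ h₁ h₂ ⊢
  cases b₀ <;> cases b₁ <;> cases b₂ <;>
    simp [G1, cycleReward] at h₀ h₁ h₂ s₃ s₄ s₅ ⊢ <;>
    refine ⟨?_, ?_, ?_⟩ <;> linarith

theorem G1_ER_eq_G1payoff (hσ : G1.Positional σ) (p : Fin 3) :
    G1.ER p σ = G1payoff p (σ [] 0) (σ [] 1) (σ [] 2) := by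
  obtain ⟨h₀, h₁, h₂⟩ := G1_reward_eq_cycleReward hσ p
  rw [ER, tsum_fintype, Fin.sum_univ_six, G1payoff, ← h₀, ← h₁, ← h₂]
  simp [G1]
  ring

end MDSG

open MDSG in
/-- The game `G₁` has no memoryless (positional) pure Nash equilibrium. -/
theorem no_memoryless_Nash_in_G1 :
    ∀ σ : Profile (Fin 6) Bool, G1.Positional σ → ¬ G1.IsNash σ := by
  intro σ hσ hNash
  have no_gain (d : Fin 6) (a : Bool) :
      G1payoff (G1.owner d) (deviate σ d a [] 0) (deviate σ d a [] 1) (deviate σ d a [] 2) ≤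
        G1payoff (G1.owner d) (σ [] 0) (σ [] 1) (σ [] 2) := by
    rw [← G1_ER_eq_G1payoff (hσ.deviate d a), ← G1_ER_eq_G1payoff hσ]
    exact hNash.ER_deviate_le d a
  simp only [deviate_apply] at no_gain
  generalize σ [] 0 = b₀, σ [] 1 = b₁, σ [] 2 = b₂ at no_gain
  cases b₀ <;> cases b₁ <;> cases b₂
  · exact absurd (no_gain 0 true) (by simp +decide [G1payoff, cycleReward, G1]; norm_num)
  · exact absurd (no_gain 0 true) (by simp +decide [G1payoff, cycleReward, G1]; norm_num)
  · exact absurd (no_gain 2 true) (by simp +decide [G1payoff, cycleReward, G1]; norm_num)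
  · exact absurd (no_gain 1 false) (by simp +decide [G1payoff, cycleReward, G1]; norm_num)
  · exact absurd (no_gain 1 true) (by simp +decide [G1payoff, cycleReward, G1]; norm_num)
  · exact absurd (no_gain 2 false) (by simp +decide [G1payoff, cycleReward, G1]; norm_num)
  · exact absurd (no_gain 0 false) (by simp +decide [G1payoff, cycleReward, G1]; norm_num)
  · exact absurd (no_gain 0 false) (by simp +decide [G1payoff, cycleReward, G1]; norm_num)
end

section
/- There exists a sequence x : ℕ → {0,1} with ∑_{i=0}^∞ x_i·(2/3)^i = 3/2; however, no eventually periodic sequence x : ℕ → {0,1} (i.e., no x for which there exist n ≥ 0 and m ≥ 1 with x_{i+m} = x_i for all i ≥ n) satisfies ∑_{i=0}^∞ x_i·(2/3)^i = 3/2. -/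
/-!
For discount factor `q ∈ [1/2, 1)` the greedy algorithm (take digit `1` whenever the remainder is
at least `1`, then rescale by `1/q`) expands every `y ∈ [0, 1/(1-q)]`, in particular `3/2` for
`q = 2/3`.

Conversely, if `∑ x i (2/3)^i = 3/2`, the tails `t n = ∑ x (n+i) (2/3)^i` satisfy
`t (n+1) = 3/2 (t n - x n)`, so `2^(n+1) t n` is an odd integer for every `n`. Eventual periodicity
would give `t (n+m) = t n` with `m ≥ 1`, making the odd integer `2^(n+m+1) t (n+m)` equal to
`2^m · 2^(n+1) t n`, which is even.
-/

open Finset Filter Topology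

section Greedy

variable {q : ℝ}

noncomputable def greedyDigit (r : ℝ) : ℝ := if 1 ≤ r then 1 else 0

noncomputable def greedyStep (q r : ℝ) : ℝ := (r - greedyDigit r) / q

lemma greedyDigit_eq_zero_or_one (r : ℝ) : greedyDigit r = 0 ∨ greedyDigit r = 1 := by
  unfold greedyDigit; split_ifs <;> simp

lemma greedyDigit_add_mul_greedyStep (hq : q ≠ 0) (r : ℝ) :
    greedyDigit r + q * greedyStep q r = r := by
  unfold greedyStep; field_simp; ring

-- `1 / 2 ≤ q` is what keeps the remainder at most `(1 - q)⁻¹` after a digit `0`.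
lemma greedyStep_mapsTo (hq : 1 / 2 ≤ q) (hq1 : q < 1) :
    Set.MapsTo (greedyStep q) (Set.Icc 0 (1 - q)⁻¹) (Set.Icc 0 (1 - q)⁻¹) := by
  rintro r ⟨hr0, hr⟩
  have hq0 : 0 < q := by linarith
  have hB : (1 - q) * (1 - q)⁻¹ = 1 := mul_inv_cancel₀ (by linarith)
  have hB2 : 2 ≤ (1 - q)⁻¹ := by
    rw [le_inv_comm₀ (by norm_num) (by linarith)]; linarith
  unfold greedyStep greedyDigit
  split_ifs with h
  · refine ⟨div_nonneg (by linarith) hq0.le, (div_le_iff₀ hq0).2 ?_⟩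
    nlinarith
  · refine ⟨div_nonneg (by linarith) hq0.le, (div_le_iff₀ hq0).2 ?_⟩
    nlinarith

lemma sum_range_greedyDigit_add (hq : q ≠ 0) (y : ℝ) (n : ℕ) :
    ∑ i ∈ range n, greedyDigit ((greedyStep q)^[i] y) * q ^ i + q ^ n * (greedyStep q)^[n] y =
      y := by
  induction n with
  | zero => simp
  | succ n ih =>
    rw [sum_range_succ, Function.iterate_succ_apply', pow_succ]
    linear_combination ih + q ^ n * greedyDigit_add_mul_greedyStep hq ((greedyStep q)^[n] y)

theorem exists_hasSum_mul_pow_of_mem_Icc (hq : 1 / 2 ≤ q) (hq1 : q < 1) {y : ℝ}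
    (hy : y ∈ Set.Icc 0 (1 - q)⁻¹) :
    ∃ x : ℕ → ℝ, (∀ i, x i = 0 ∨ x i = 1) ∧ HasSum (fun i ↦ x i * q ^ i) y := by
  have hq0 : 0 < q := by linarith
  set r : ℕ → ℝ := fun n ↦ (greedyStep q)^[n] y
  have hr n : r n ∈ Set.Icc 0 (1 - q)⁻¹ := (greedyStep_mapsTo hq hq1).iterate n hy
  refine ⟨fun i ↦ greedyDigit (r i), fun i ↦ greedyDigit_eq_zero_or_one _, ?_⟩
  have htail : Tendsto (fun n ↦ q ^ n * r n) atTop (𝓝 0) := by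
    refine squeeze_zero (fun n ↦ mul_nonneg (by positivity) (hr n).1)
      (fun n ↦ mul_le_mul_of_nonneg_left (hr n).2 (by positivity)) ?_
    simpa using (tendsto_pow_atTop_nhds_zero_of_lt_one hq0.le hq1).mul_const (1 - q)⁻¹
  rw [hasSum_iff_tendsto_nat_of_nonneg]
  · have h := (tendsto_const_nhds (x := y)).sub htail
    rw [sub_zero] at h
    refine h.congr fun n ↦ ?_
    rw [sub_eq_iff_eq_add]; exact (sum_range_greedyDigit_add hq0.ne' y n).symm
  · intro i; rcases greedyDigit_eq_zero_or_one (r i) with h | h <;> simp [h, hq0.le]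

end Greedy

section Tail

variable {q : ℝ} {x : ℕ → ℝ}

noncomputable def discountedTail (q : ℝ) (x : ℕ → ℝ) (n : ℕ) : ℝ := ∑' i, x (n + i) * q ^ i

lemma summable_mul_pow_of_binary (hq0 : 0 ≤ q) (hq1 : q < 1) (hx : ∀ i, x i = 0 ∨ x i = 1) :
    Summable fun i ↦ x i * q ^ i := by
  refine (summable_geometric_of_lt_one hq0 hq1).of_nonneg_of_le (fun i ↦ ?_) (fun i ↦ ?_) <;>
    rcases hx i with h | h <;> simp [h, pow_nonneg hq0]

lemma discountedTail_eq_add {n : ℕ} (hs : Summable fun i ↦ x (n + i) * q ^ i) :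
    discountedTail q x n = x n + q * discountedTail q x (n + 1) := by
  rw [discountedTail, hs.tsum_eq_zero_add, discountedTail, ← tsum_mul_left]
  simp only [add_zero, pow_zero, mul_one, pow_succ]
  congr 1
  refine tsum_congr fun i ↦ ?_
  rw [add_right_comm, ← add_assoc]; ring

lemma discountedTail_add_of_periodic {n m : ℕ} (hper : ∀ i, n ≤ i → x (i + m) = x i) :
    discountedTail q x (n + m) = discountedTail q x n := by
  refine tsum_congr fun i ↦ ?_
  rw [add_right_comm, hper _ (Nat.le_add_right n i)]

-- `2^(n+1) t n = 3^(n+1) - ∑_{i<n} 2^(i+1) 3^(n-i) x i`: an odd number minus an even one.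
lemma exists_odd_discountedTail_mul_two_pow (hx : ∀ i, x i = 0 ∨ x i = 1)
    (h0 : discountedTail (2 / 3) x 0 = 3 / 2) (n : ℕ) :
    ∃ k : ℤ, Odd k ∧ discountedTail (2 / 3) x n * 2 ^ (n + 1) = k := by
  induction n with
  | zero => exact ⟨3, by decide, by rw [h0]; norm_num⟩
  | succ n ih =>
    obtain ⟨k, hk, hkn⟩ := ih
    have hrec := discountedTail_eq_add
      (summable_mul_pow_of_binary (q := 2 / 3) (by norm_num) (by norm_num) fun i ↦ hx (n + i))
    have heven : Even ((2 : ℤ) ^ (n + 1)) := even_two.pow_of_ne_zero n.succ_ne_zero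
    rcases hx n with h | h
    · refine ⟨3 * k, (by decide : Odd (3 : ℤ)).mul hk, ?_⟩
      push_cast
      linear_combination 3 * hkn - 3 * 2 ^ (n + 1) * (hrec + h)
    · refine ⟨3 * k - 3 * 2 ^ (n + 1),
        ((by decide : Odd (3 : ℤ)).mul hk).sub_even (heven.mul_left 3), ?_⟩
      push_cast
      linear_combination 3 * hkn - 3 * 2 ^ (n + 1) * (hrec + h)

lemma discountedTail_add_ne (hx : ∀ i, x i = 0 ∨ x i = 1)
    (h0 : discountedTail (2 / 3) x 0 = 3 / 2) (n : ℕ) {m : ℕ} (hm : m ≠ 0) :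
    discountedTail (2 / 3) x (n + m) ≠ discountedTail (2 / 3) x n := by
  intro heq
  obtain ⟨k, hk, hkn⟩ := exists_odd_discountedTail_mul_two_pow hx h0 n
  obtain ⟨k', hk', hkn'⟩ := exists_odd_discountedTail_mul_two_pow hx h0 (n + m)
  have hkk' : k' = k * 2 ^ m := by
    have : (k' : ℝ) = k * 2 ^ m := by
      rw [← hkn, ← hkn', heq, mul_assoc, ← pow_add, add_right_comm]
    exact_mod_cast this
  rw [hkk', Int.odd_mul, Int.odd_pow' hm] at hk'
  exact absurd hk'.2 (by decide)

end Tail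

/-- There is a binary sequence `x : ℕ → {0,1}` whose discounted sum with
discount factor `2/3` equals `3/2`, but no eventually periodic binary
sequence has this discounted sum. -/
theorem discounted_sum_three_halves_needs_aperiodic_sequence :
    (∃ x : ℕ → ℝ, (∀ i, x i = 0 ∨ x i = 1) ∧
      ∑' i : ℕ, x i * (2 / 3) ^ i = 3 / 2) ∧
    (∀ x : ℕ → ℝ, (∀ i, x i = 0 ∨ x i = 1) →
      (∃ (n m : ℕ), 1 ≤ m ∧ ∀ i, n ≤ i → x (i + m) = x i) →
      ∑' i : ℕ, x i * (2 / 3) ^ i ≠ 3 / 2) := by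
  constructor
  · obtain ⟨x, hx, hsum⟩ := exists_hasSum_mul_pow_of_mem_Icc (q := 2 / 3) (y := 3 / 2)
      (by norm_num) (by norm_num) (by norm_num)
    exact ⟨x, hx, hsum.tsum_eq⟩
  · rintro x hx ⟨n, m, hm, hper⟩ hsum
    have h0 : discountedTail (2 / 3) x 0 = 3 / 2 := by simpa [discountedTail] using hsum
    exact discountedTail_add_ne hx h0 n (by omega) (discountedTail_add_of_periodic hper)
end

section
/- Let an MDSG with designated leader l be given, and let C ⊆ D be the set of stationary mixed decision vectors d such that for every player p ≠ l and every vertex v owned by p, E_p(d,v) ≥ r̲_p(v). If C is nonempty, then there exists d* ∈ C maximizing the leader's expected reward ∑_{v∈V} Δ(v)·E_l(d,v) over C; i.e., an optimal stationary mixed leader strategy profile satisfying the equilibrium constraints exists. (Applied to the product of an MDSG with a finite memory set, this yields the existence of an optimal mixed leader strategy profile with any predefined memory bound.) -/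
/-!
For a stationary decision vector `d`, the expected rewards `E d p` are the fixed point of the
Bellman operator of `d`, which is a `λ`-contraction for the sup distance. The a-posteriori
estimate for contractions therefore makes `d ↦ E d` continuous on the compact set of decision
vectors, so the set of decision vectors satisfying the lower-value constraints is compact, and the
leader's expected reward, being continuous, attains its maximum on it when it is nonempty.
-/

open scoped BigOperators

open Set Filter Topology NNReal Function

namespace MDSG

theorem simplexD_eq_pi (V A : Type) [Fintype A] :
    simplexD V A = univ.pi fun _ : V => stdSimplex ℝ A := by
  ext d
  simp [simplexD, stdSimplex, tsum_fintype]

theorem isCompact_simplexD (V A : Type) [Fintype A] : IsCompact (simplexD V A) := by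
  rw [simplexD_eq_pi]
  exact isCompact_univ_pi fun _ => isCompact_stdSimplex ℝ A

section Bellman

variable {V A : Type} [Fintype A]

def bellman (tr : V → A → V) (c : V → A → ℝ) (γ : ℝ) (d : V → A → ℝ) (f : V → ℝ) : V → ℝ :=
  fun v => ∑ a, d v a * (c v a + γ * f (tr v a))

theorem continuous_bellman_apply (tr : V → A → V) (c : V → A → ℝ) (γ : ℝ) (f : V → ℝ) :
    Continuous fun d => bellman tr c γ d f := by
  unfold bellman
  fun_prop

variable [Fintype V]

theorem lipschitzWith_bellman (tr : V → A → V) (c : V → A → ℝ) (γ : ℝ≥0) {d : V → A → ℝ}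
    (hd : d ∈ simplexD V A) : LipschitzWith γ (bellman tr c γ d) := by
  rw [simplexD_eq_pi] at hd
  refine LipschitzWith.of_dist_le_mul fun f g => (dist_pi_le_iff (by positivity)).2 fun v => ?_
  obtain ⟨hd_nonneg, hd_sum⟩ := hd v trivial
  calc dist (bellman tr c γ d f v) (bellman tr c γ d g v)
      = |∑ a, d v a * (γ * (f (tr v a) - g (tr v a)))| := by
        rw [Real.dist_eq, bellman, bellman, ← Finset.sum_sub_distrib]
        congr 1
        exact Finset.sum_congr rfl fun a _ => by ring
    _ ≤ ∑ a, d v a * (γ * dist f g) := by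
        refine (Finset.abs_sum_le_sum_abs _ _).trans (Finset.sum_le_sum fun a _ => ?_)
        rw [abs_mul, abs_mul, abs_of_nonneg (hd_nonneg a), NNReal.abs_eq, ← Real.dist_eq]
        gcongr
        · exact hd_nonneg a
        · exact dist_le_pi_dist f g _
    _ = γ * dist f g := by rw [← Finset.sum_mul, hd_sum, one_mul]

theorem continuousOn_of_isFixedPt_bellman (tr : V → A → V) (c : V → A → ℝ) {γ : ℝ≥0}
    (hγ : γ < 1) {E : (V → A → ℝ) → V → ℝ}
    (hE : ∀ d ∈ simplexD V A, IsFixedPt (bellman tr c γ d) (E d)) :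
    ContinuousOn E (simplexD V A) := by
  intro d hd
  -- `E d` is an approximate fixed point of the contraction `bellman d'`, with defect tending to 0.
  have hclose : ∀ d' ∈ simplexD V A,
      dist (E d') (E d) ≤ dist (bellman tr c γ d' (E d)) (bellman tr c γ d (E d)) / (1 - γ) :=
    fun d' hd' => by
      have hcontr : ContractingWith γ (bellman tr c γ d') := ⟨hγ, lipschitzWith_bellman tr c γ hd'⟩
      rw [dist_comm, dist_comm (bellman _ _ _ d' _), (hE d hd).eq]
      exact hcontr.dist_le_of_fixedPoint _ (hE d' hd')
  have hlim : Tendsto (fun d' => dist (bellman tr c γ d' (E d)) (bellman tr c γ d (E d)) / (1 - γ))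
      (𝓝[simplexD V A] d) (𝓝 0) := by
    rw [← zero_div (1 - (γ : ℝ)), ← dist_self (bellman tr c γ d (E d))]
    exact (((continuous_bellman_apply tr c γ (E d)).dist continuous_const).tendsto d).mono_left
      nhdsWithin_le_nhds |>.div_const _
  exact tendsto_iff_dist_tendsto_zero.2 <|
    squeeze_zero' (Eventually.of_forall fun _ => dist_nonneg)
      (eventually_nhdsWithin_of_forall hclose) hlim

end Bellman

end MDSG

open MDSG in
/-- Let an MDSG with designated leader `l` be given, and let `C` be the set of
stationary mixed decision vectors `d` such that for every player `p ≠ l` and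
every vertex `v` owned by `p`, the expected discounted reward `E d p v`
(characterized by the fixed-point equations) is at least the lower value of
`p` at `v`.  If `C` is nonempty, then some `d ∈ C` maximizes the leader's
expected reward `∑ v, init v * E d l v` over `C`: an optimal stationary mixed
leader strategy profile satisfying the equilibrium constraints exists. -/
theorem optimal_constrained_stationary_mixed_profile_exists
    {P V A : Type} (G : MDSG P V A) (l : P)
    (E : (V → A → ℝ) → P → V → ℝ)
    (hE : ∀ d ∈ simplexD V A, ∀ (p : P) (v : V),
      E d p v = ∑' a : A, d v a * (G.rew p v a + G.disc * E d p (G.tr v a)))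
    (hne : ∃ d ∈ simplexD V A, ∀ p : P, p ≠ l → ∀ v : V,
      G.owner v = p → G.lowerValue p v ≤ E d p v) :
    ∃ d, (d ∈ simplexD V A ∧ ∀ p : P, p ≠ l → ∀ v : V,
        G.owner v = p → G.lowerValue p v ≤ E d p v) ∧
      ∀ d', (d' ∈ simplexD V A ∧ ∀ p : P, p ≠ l → ∀ v : V,
          G.owner v = p → G.lowerValue p v ≤ E d' p v) →
        ∑' v : V, G.init v * E d' l v ≤ ∑' v : V, G.init v * E d l v := by
  have := G.fin_V
  have := G.fin_A
  have := Fintype.ofFinite V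
  have := Fintype.ofFinite A
  let γ : ℝ≥0 := ⟨G.disc, G.disc_pos.le⟩
  have hfix : ∀ p, ∀ d ∈ simplexD V A, IsFixedPt (bellman G.tr (G.rew p) γ d) (E d p) :=
    fun p d hd => funext fun v => by simp only [bellman, hE d hd p v, tsum_fintype]; rfl
  have hcont : ContinuousOn E (simplexD V A) := continuousOn_pi.2 fun p =>
    continuousOn_of_isFixedPt_bellman G.tr (G.rew p) (show γ < 1 from G.disc_lt_one) (hfix p)
  let T : Set (P → V → ℝ) := {e | ∀ p, p ≠ l → ∀ v, G.owner v = p → G.lowerValue p v ≤ e p v}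
  have hT : IsClosed T := by
    simp only [T, ofPred_forall]
    exact isClosed_iInter fun p => isClosed_iInter fun _ => isClosed_iInter fun v =>
      isClosed_iInter fun _ => isClosed_le continuous_const (by fun_prop)
  have hC : IsCompact (simplexD V A ∩ E ⁻¹' T) :=
    (isCompact_simplexD V A).of_isClosed_subset
      (hcont.preimage_isClosed_of_isClosed (isCompact_simplexD V A).isClosed hT)
      inter_subset_left
  have hobj : ContinuousOn (fun d => ∑' v, G.init v * E d l v) (simplexD V A) := by
    simp only [tsum_fintype]
    fun_prop
  obtain ⟨d, hd, hmax⟩ := hC.exists_isMaxOn hne (hobj.mono inter_subset_left)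
  exact ⟨d, hd, fun d' hd' => hmax hd'⟩
end
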